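/- Let G be a finite median graph with a vertex v such that deg(v) = idim(G). Then G is isomorphic to the simplex graph S(H) of some graph H; in fact one may take H to be the graph on the neighbors of v where two neighbors are adjacent iff they have a common neighbor other than v. -/

import Mathlib

open SimpleGraph

/-- The hypercube graph `Q_n` on vertex set `{0,1}^n`. -/
def cubeGraph (n : ℕ) : SimpleGraph (Fin n → Bool) where
  Adj a b := (Finset.univ.filter fun i => a i ≠ b i).card = 1
  symm := by
    refine ⟨?_⟩
    intro a b h
    have hset : (Finset.univ.filter fun i => b i ≠ a i) =
        (Finset.univ.filter fun i => a i ≠ b i) := by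
      apply Finset.filter_congr; intro i _; exact ne_comm
    rw [hset]; exact h
  loopless := by refine ⟨?_⟩; intro a h; simp at h

/-- The simplex graph `S(G)`: vertices are the cliques of `G` (including `∅`),
two cliques adjacent iff they differ in exactly one vertex. -/
noncomputable def simplexGraph {V : Type*} (G : SimpleGraph V) :
    SimpleGraph {s : Finset V // G.IsClique (↑s : Set V)} := by
  classical
  exact
    { Adj := fun a b => (symmDiff a.1 b.1).card = 1
      symm := by refine ⟨?_⟩; intro a b h; rwa [symmDiff_comm]
      loopless := by refine ⟨?_⟩; intro a h; simp [symmDiff_self] at h }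

/-- A median graph: connected and every triple of vertices has a unique median. -/
def IsMedianGraph {V : Type*} (G : SimpleGraph V) : Prop :=
  G.Connected ∧ ∀ u v w : V, ∃! x : V,
    G.dist u x + G.dist x v = G.dist u v ∧
    G.dist u x + G.dist x w = G.dist u w ∧
    G.dist v x + G.dist x w = G.dist v w

/-- `f` is an isometric embedding of `G` into the hypercube `Q_n`
(injective, induced, and distance preserving). -/
def IsIsometricEmbedding {V : Type*} (G : SimpleGraph V) (n : ℕ) (f : V → Fin n → Bool) : Prop :=
  Function.Injective f ∧
    (∀ u v, G.Adj u v ↔ (cubeGraph n).Adj (f u) (f v)) ∧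
    (∀ u v, G.dist u v = (cubeGraph n).dist (f u) (f v))

/-- A partial cube: a graph isomorphic to an isometric subgraph of a hypercube. -/
def IsPartialCube {V : Type*} (G : SimpleGraph V) : Prop :=
  ∃ n f, IsIsometricEmbedding G n f

/-- A daisy cube: an isometric subgraph of a hypercube whose vertex set is
downward closed for the coordinatewise order. -/
def IsDaisyCube {V : Type*} (G : SimpleGraph V) : Prop :=
  ∃ n f, IsIsometricEmbedding G n f ∧
    ∀ (u : V) (b : Fin n → Bool), (∀ i, b i ≤ f u i) → ∃ w, f w = b

/-- The isometric dimension of `G`. -/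
noncomputable def idim {V : Type*} (G : SimpleGraph V) : ℕ :=
  sInf {n | ∃ f, IsIsometricEmbedding G n f}

/-- The Djoković–Winkler relation `Θ` on (unordered) edges. -/
def ThetaE {V : Type*} (G : SimpleGraph V) (e f : Sym2 V) : Prop :=
  ∃ u v x y, e = s(u, v) ∧ f = s(x, y) ∧
    G.dist u x + G.dist v y ≠ G.dist u y + G.dist v x

/-- The halfspace `W_{uv}`. -/
def Wset {V : Type*} (G : SimpleGraph V) (u v : V) : Set V :=
  {w | G.dist u w < G.dist v w}

/-- The set `U_{uv}` of vertices of `W_{uv}` incident with an edge of `F_{uv}`. -/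
def Uset {V : Type*} (G : SimpleGraph V) (u v : V) : Set V :=
  {w | w ∈ Wset G u v ∧ ∃ b ∈ Wset G v u, G.Adj w b}

/-- The Θ-classes of the edges `uv` and `xy` cross: all four intersections of
halfspaces are nonempty. -/
def Cross {V : Type*} (G : SimpleGraph V) (u v x y : V) : Prop :=
  (Wset G u v ∩ Wset G x y).Nonempty ∧ (Wset G u v ∩ Wset G y x).Nonempty ∧
  (Wset G v u ∩ Wset G x y).Nonempty ∧ (Wset G v u ∩ Wset G y x).Nonempty

/-- A set of vertices is convex if it contains every geodesic between its points. -/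
def ConvexSet {V : Type*} (G : SimpleGraph V) (S : Set V) : Prop :=
  ∀ u ∈ S, ∀ v ∈ S, ∀ p : G.Walk u v, p.length = G.dist u v → ∀ w ∈ p.support, w ∈ S

/-- The cycle graph on `ZMod m` (for `m ≥ 3`). -/
def cycG (m : ℕ) : SimpleGraph (ZMod m) where
  Adj i j := i ≠ j ∧ (j = i + 1 ∨ i = j + 1)
  symm := by refine ⟨?_⟩; rintro i j ⟨h, h'⟩; exact ⟨h.symm, h'.symm⟩
  loopless := by refine ⟨?_⟩; rintro i ⟨h, _⟩; exact h rfl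
/-- The graph on the neighbors of `v`, where two neighbors are adjacent iff they have
a common neighbor other than `v`. -/
def nbrGraph {V : Type*} (G : SimpleGraph V) (v : V) : SimpleGraph {w : V // G.Adj v w} where
  Adj a b := a ≠ b ∧ ∃ x : V, x ≠ v ∧ G.Adj a.1 x ∧ G.Adj b.1 x
  symm := by refine ⟨?_⟩; rintro a b ⟨h, x, hx, ha, hb⟩; exact ⟨h.symm, x, hx, hb, ha⟩
  loopless := by refine ⟨?_⟩; rintro a ⟨h, _⟩; exact h rfl

/-!
Fix an isometric embedding `f` of `G` into `Q_n` with `n = idim G = deg v`, and record each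
vertex `u` by the set `S u` of coordinates in which `f u` and `f v` differ, so that distances
become sizes of symmetric differences and medians become coordinatewise majorities. The `n`
neighbours of `v` are sent to `n` distinct singletons, so the coordinates are the neighbours
of `v` themselves. For `a ≠ b` in `S u`, the majority of `S u`, `{a}`, `{b}` is `{a, b}`, and
a vertex with `S x = {a, b}` is exactly a common neighbour of `a` and `b` other than `v`; so
each `S u` is a clique of `nbrGraph G v`. Conversely every clique `T` is some `S u`, by
induction: `T` is the majority of `T \ {a}`, `T \ {b}` and `{a, b}`.
-/

open Finset
open scoped symmDiff

namespace Finset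

variable {α : Type*} [DecidableEq α]

def majority (s t u : Finset α) : Finset α := s ∩ t ∪ s ∩ u ∪ t ∩ u

lemma disjoint_symmDiff_of_card_add_eq {s t x : Finset α}
    (h : #(s ∆ x) + #(x ∆ t) = #(s ∆ t)) : Disjoint (s ∆ x) (x ∆ t) := by
  have hsub : s ∆ t ⊆ s ∆ x ∪ x ∆ t := symmDiff_triangle s x t
  have := card_union_add_card_inter (s ∆ x) (x ∆ t)
  have := card_le_card hsub
  rw [disjoint_iff_inter_eq_empty, ← card_eq_zero]
  omega

lemma eq_majority_of_disjoint {s t u x : Finset α} (hst : Disjoint (s ∆ x) (x ∆ t))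
    (hsu : Disjoint (s ∆ x) (x ∆ u)) (htu : Disjoint (t ∆ x) (x ∆ u)) :
    x = majority s t u := by
  ext i
  have h₁ := @disjoint_left.mp hst i
  have h₂ := @disjoint_left.mp hsu i
  have h₃ := @disjoint_left.mp htu i
  simp only [mem_symmDiff] at h₁ h₂ h₃
  simp only [majority, mem_union, mem_inter]
  by_cases hs : i ∈ s <;> by_cases ht : i ∈ t <;> by_cases hu : i ∈ u <;> simp_all

lemma majority_singleton_singleton {s : Finset α} {i j : α} (hi : i ∈ s) (hj : j ∈ s)
    (hij : i ≠ j) : majority s {i} {j} = {i, j} := by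
  ext k
  simp only [majority, mem_union, mem_inter, mem_singleton, mem_insert]
  constructor
  · rintro ((⟨-, rfl⟩ | ⟨-, rfl⟩) | ⟨rfl, rfl⟩) <;> simp
  · rintro (rfl | rfl) <;> simp [hi, hj]

lemma majority_erase_erase_pair {T : Finset α} {a b : α} (ha : a ∈ T) (hb : b ∈ T)
    (hab : a ≠ b) : majority (T.erase a) (T.erase b) {a, b} = T := by
  ext k
  simp only [majority, mem_union, mem_inter, mem_erase, mem_insert, mem_singleton]
  constructor
  · rintro ((⟨⟨-, hk⟩, -⟩ | ⟨⟨-, hk⟩, -⟩) | ⟨⟨-, hk⟩, -⟩) <;> exact hk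
  · intro hk
    by_cases hka : k = a
    · subst hka; exact Or.inr ⟨⟨hab, hk⟩, Or.inl rfl⟩
    · by_cases hkb : k = b
      · subst hkb; exact Or.inl (Or.inr ⟨⟨hka, hk⟩, Or.inr rfl⟩)
      · exact Or.inl (Or.inl ⟨⟨hka, hk⟩, hkb, hk⟩)

lemma mem_of_pairwise_pair_mem {𝒮 : Set (Finset α)}
    (hmaj : ∀ s ∈ 𝒮, ∀ t ∈ 𝒮, ∀ u ∈ 𝒮, majority s t u ∈ 𝒮) (hempty : ∅ ∈ 𝒮)
    (hsingle : ∀ i, {i} ∈ 𝒮) (T : Finset α)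
    (hT : (T : Set α).Pairwise fun i j => {i, j} ∈ 𝒮) : T ∈ 𝒮 := by
  induction T using Finset.strongInduction with
  | H T ih =>
    obtain rfl | hne := T.eq_empty_or_nonempty
    · exact hempty
    obtain ⟨i, rfl⟩ | ⟨a, ha, b, hb, hab⟩ := hne.exists_eq_singleton_or_nontrivial
    · exact hsingle i
    have hsub (c : α) (hc : c ∈ T) : T.erase c ∈ 𝒮 :=
      ih _ (erase_ssubset hc) (hT.mono (by simp))
    rw [← majority_erase_erase_pair ha hb hab]
    exact hmaj _ (hsub a ha) _ (hsub b hb) _ (hT ha hb hab)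

lemma singleton_symmDiff_pair {a b : α} (hab : a ≠ b) :
    {a} ∆ {a, b} = ({b} : Finset α) := by
  ext k
  by_cases hka : k = a
  · subst hka; simp [mem_symmDiff, hab]
  · simp [mem_symmDiff, hka]

lemma mem_of_card_singleton_symmDiff_eq_one {a : α} {s : Finset α}
    (h : #({a} ∆ s) = 1) (hs : s.Nonempty) : a ∈ s ∧ #s = 2 := by
  by_cases ha : a ∈ s
  · have : {a} ∆ s = s.erase a := by
      ext k
      by_cases hka : k = a
      · subst hka; simp [mem_symmDiff, ha]
      · simp [mem_symmDiff, hka]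
    rw [this, card_erase_of_mem ha] at h
    exact ⟨ha, by have := hs.card_pos; omega⟩
  · have : {a} ∆ s = insert a s := by
      ext k
      by_cases hka : k = a
      · subst hka; simp [mem_symmDiff, ha]
      · simp [mem_symmDiff, hka]
    rw [this, card_insert_of_notMem ha, Nat.add_eq_right, card_eq_zero] at h
    exact absurd h hs.ne_empty

end Finset

section Hypercube

variable {n : ℕ}

lemma cubeGraph_adj_iff {a b : Fin n → Bool} : (cubeGraph n).Adj a b ↔ hammingDist a b = 1 :=
  Iff.rfl

lemma hammingDist_le_length {a b : Fin n → Bool} (p : (cubeGraph n).Walk a b) :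
    hammingDist a b ≤ p.length := by
  induction p with
  | nil => simp
  | @cons u w x hadj _ ih =>
    have := hammingDist_triangle u w x
    rw [cubeGraph_adj_iff.mp hadj] at this
    rw [Walk.length_cons]
    omega

lemma hammingDist_update_left_add_one {ι β : Type*} [Fintype ι] [DecidableEq ι] [DecidableEq β]
    {a b : ι → β} {i : ι} (h : a i ≠ b i) :
    hammingDist (Function.update a i (b i)) b + 1 = hammingDist a b := by
  have : ({j | Function.update a i (b i) j ≠ b j} : Finset ι) =
      ({j | a j ≠ b j} : Finset ι).erase i := by
    ext j
    by_cases hj : j = i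
    · subst hj; simp
    · simp [hj]
  unfold hammingDist
  rw [this, card_erase_add_one (by simpa using h)]

lemma hammingDist_update_self {ι β : Type*} [Fintype ι] [DecidableEq ι] [DecidableEq β]
    {a : ι → β} {i : ι} {x : β} (h : a i ≠ x) :
    hammingDist a (Function.update a i x) = 1 := by
  have : ({j | a j ≠ Function.update a i x j} : Finset ι) = {i} := by
    ext j
    by_cases hj : j = i
    · subst hj; simpa using h
    · simp [hj]
  unfold hammingDist
  rw [this, card_singleton]

lemma exists_walk_length_eq_hammingDist (a b : Fin n → Bool) :
    ∃ p : (cubeGraph n).Walk a b, p.length = hammingDist a b := by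
  induction hk : hammingDist a b generalizing a with
  | zero =>
    obtain rfl := hammingDist_eq_zero.mp hk
    exact ⟨.nil, rfl⟩
  | succ k ih =>
    obtain ⟨i, hi⟩ : ∃ i, a i ≠ b i := by
      by_contra! h
      simp [funext h] at hk
    obtain ⟨p, hp⟩ := ih (Function.update a i (b i))
      (by have := hammingDist_update_left_add_one hi; omega)
    exact ⟨.cons (cubeGraph_adj_iff.mpr (hammingDist_update_self hi)) p, by simp [hp]⟩

lemma cubeGraph_dist (a b : Fin n → Bool) : (cubeGraph n).dist a b = hammingDist a b := by
  obtain ⟨p, hp⟩ := exists_walk_length_eq_hammingDist a b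
  obtain ⟨q, hq⟩ := Reachable.exists_walk_length_eq_dist ⟨p⟩
  exact le_antisymm (hp ▸ dist_le p) (hq ▸ hammingDist_le_length q)

end Hypercube

lemma card_symmDiff_filter_ne {ι : Type*} [Fintype ι] [DecidableEq ι] (a b c : ι → Bool) :
    #(({i | a i ≠ c i} : Finset ι) ∆ ({i | b i ≠ c i} : Finset ι)) = hammingDist a b := by
  unfold hammingDist
  congr 1
  ext i
  simp only [mem_symmDiff, mem_filter, mem_univ, true_and]
  cases a i <;> cases b i <;> cases c i <;> simp

lemma simplexGraph_adj {V : Type*} [DecidableEq V] {H : SimpleGraph V}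
    {a b : {s : Finset V // H.IsClique (s : Set V)}} :
    (simplexGraph H).Adj a b ↔ #(a.1 ∆ b.1) = 1 := by
  unfold simplexGraph
  exact iff_of_eq (by congr!)

lemma isIsometricEmbedding_of_subsingleton {V : Type*} [Subsingleton V] (G : SimpleGraph V)
    (f : V → Fin 0 → Bool) : IsIsometricEmbedding G 0 f :=
  ⟨fun u w _ => Subsingleton.elim u w, fun u w => by simp [Subsingleton.elim u w],
    fun u w => by simp [Subsingleton.elim u w]⟩

section SymmDiffModel

variable {V ι : Type*} [DecidableEq ι] {G : SimpleGraph V} {S : V → Finset ι}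

lemma adj_iff_card_symmDiff_eq_one (hS : ∀ u w, G.dist u w = #(S u ∆ S w)) {u w : V} :
    G.Adj u w ↔ #(S u ∆ S w) = 1 := by
  rw [← hS, dist_eq_one_iff_adj]

lemma eq_of_dist_eq_card_symmDiff (hS : ∀ u w, G.dist u w = #(S u ∆ S w)) {u w : V}
    (hr : G.Reachable u w) (h : S u = S w) : u = w :=
  hr.dist_eq_zero_iff.mp (by simp [hS, h])

lemma exists_eq_majority (hG : IsMedianGraph G) (hS : ∀ u w, G.dist u w = #(S u ∆ S w))
    (u₁ u₂ u₃ : V) : ∃ x, S x = majority (S u₁) (S u₂) (S u₃) := by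
  obtain ⟨x, ⟨h₁₂, h₁₃, h₂₃⟩, -⟩ := hG.2 u₁ u₂ u₃
  simp only [hS] at h₁₂ h₁₃ h₂₃
  exact ⟨x, eq_majority_of_disjoint (disjoint_symmDiff_of_card_add_eq h₁₂)
    (disjoint_symmDiff_of_card_add_eq h₁₃) (disjoint_symmDiff_of_card_add_eq h₂₃)⟩

end SymmDiffModel

section NeighborCoordinates

variable {V : Type*} [DecidableEq V] {G : SimpleGraph V} {v : V}
  {S : V → Finset {w // G.Adj v w}}

lemma nbrGraph_adj_iff_exists_eq_pair (hG : G.Connected)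
    (hS : ∀ u w, G.dist u w = #(S u ∆ S w)) (hv : S v = ∅)
    (hnbr : ∀ w : {w // G.Adj v w}, S w = {w}) {a b : {w // G.Adj v w}} (hab : a ≠ b) :
    (nbrGraph G v).Adj a b ↔ ∃ x, S x = {a, b} := by
  constructor
  · rintro ⟨-, x, hxv, hax, hbx⟩
    have hx : (S x).Nonempty := by
      rw [nonempty_iff_ne_empty, ← hv]
      exact fun h => hxv (eq_of_dist_eq_card_symmDiff hS (hG x v) h)
    rw [adj_iff_card_symmDiff_eq_one hS, hnbr] at hax hbx
    obtain ⟨ha, hcard⟩ := mem_of_card_singleton_symmDiff_eq_one hax hx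
    obtain ⟨hb, -⟩ := mem_of_card_singleton_symmDiff_eq_one hbx hx
    refine ⟨x, (eq_of_subset_of_card_le (insert_subset ha (singleton_subset_iff.mpr hb)) ?_).symm⟩
    rw [hcard, card_pair hab]
  · rintro ⟨x, hx⟩
    have hxv : x ≠ v := by
      rintro rfl
      exact insert_ne_empty a {b} (hx ▸ hv)
    refine ⟨hab, x, hxv, ?_, ?_⟩
    · rw [adj_iff_card_symmDiff_eq_one hS, hnbr, hx, singleton_symmDiff_pair hab, card_singleton]
    · rw [adj_iff_card_symmDiff_eq_one hS, hnbr, hx, pair_comm, singleton_symmDiff_pair hab.symm,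
        card_singleton]

lemma isClique_nbrGraph (hG : IsMedianGraph G) (hS : ∀ u w, G.dist u w = #(S u ∆ S w))
    (hv : S v = ∅) (hnbr : ∀ w : {w // G.Adj v w}, S w = {w}) (u : V) :
    (nbrGraph G v).IsClique (S u : Set {w // G.Adj v w}) := by
  intro a ha b hb hab
  obtain ⟨x, hx⟩ := exists_eq_majority hG hS u a b
  rw [hnbr, hnbr, majority_singleton_singleton ha hb hab] at hx
  exact (nbrGraph_adj_iff_exists_eq_pair hG.1 hS hv hnbr hab).mpr ⟨x, hx⟩

lemma exists_eq_of_isClique_nbrGraph (hG : IsMedianGraph G)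
    (hS : ∀ u w, G.dist u w = #(S u ∆ S w)) (hv : S v = ∅)
    (hnbr : ∀ w : {w // G.Adj v w}, S w = {w})
    {T : Finset {w // G.Adj v w}}
    (hT : (nbrGraph G v).IsClique (T : Set {w // G.Adj v w})) : ∃ u, S u = T := by
  refine mem_of_pairwise_pair_mem (𝒮 := Set.range S) ?_ ⟨v, hv⟩ (fun a => ⟨a, hnbr a⟩) T
    (hT.imp fun a b hab => (nbrGraph_adj_iff_exists_eq_pair hG.1 hS hv hnbr hab.ne).mp hab)
  rintro _ ⟨u₁, rfl⟩ _ ⟨u₂, rfl⟩ _ ⟨u₃, rfl⟩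
  exact exists_eq_majority hG hS u₁ u₂ u₃

theorem nonempty_iso_simplexGraph_nbrGraph (hG : IsMedianGraph G)
    (hS : ∀ u w, G.dist u w = #(S u ∆ S w)) (hv : S v = ∅)
    (hnbr : ∀ w : {w // G.Adj v w}, S w = {w}) :
    Nonempty (G ≃g simplexGraph (nbrGraph G v)) := by
  let Φ : V → {T : Finset {w // G.Adj v w} // (nbrGraph G v).IsClique (T : Set _)} :=
    fun u => ⟨S u, isClique_nbrGraph hG hS hv hnbr u⟩
  have hΦ : Function.Bijective Φ := by
    refine ⟨fun u w h => eq_of_dist_eq_card_symmDiff hS (hG.1 u w) (congrArg Subtype.val h), ?_⟩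
    rintro ⟨T, hT⟩
    obtain ⟨u, hu⟩ := exists_eq_of_isClique_nbrGraph hG hS hv hnbr hT
    exact ⟨u, Subtype.ext hu⟩
  exact ⟨⟨Equiv.ofBijective Φ hΦ, by
    intro u w
    simp only [Equiv.ofBijective_apply, simplexGraph_adj, Φ]
    exact (adj_iff_card_symmDiff_eq_one hS).symm⟩⟩

end NeighborCoordinates

section Embedding

variable {V : Type*} [Fintype V] {G : SimpleGraph V} [DecidableRel G.Adj] {v : V}

lemma exists_isIsometricEmbedding_idim (hG : G.Connected) (hdeg : G.degree v = idim G) :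
    ∃ f, IsIsometricEmbedding G (idim G) f := by
  refine Nat.sInf_mem (s := {n | ∃ f, IsIsometricEmbedding G n f})
    (Set.nonempty_iff_ne_empty.mpr fun hempty => ?_)
  -- With no embedding at all, `idim G = sInf ∅ = 0`; then `v` is isolated, so `G` is a point.
  have hv : ∀ u, u = v := fun u => by_contra fun hu =>
    not_reachable_of_left_degree_zero (Ne.symm hu) (by rw [hdeg, idim, hempty, Nat.sInf_empty])
      (hG v u)
  have : Subsingleton V := ⟨fun u w => (hv u).trans (hv w).symm⟩
  exact (Set.eq_empty_iff_forall_notMem.mp hempty) 0 ⟨_, isIsometricEmbedding_of_subsingleton G 0⟩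

end Embedding

section Coordinates

variable {V : Type*} [Fintype V] [DecidableEq V] {G : SimpleGraph V} [DecidableRel G.Adj]

lemma IsIsometricEmbedding.exists_neighbor_coordinates {n : ℕ} {f : V → Fin n → Bool}
    (hf : IsIsometricEmbedding G n f) {v : V} (hdeg : G.degree v = n) :
    ∃ S : V → Finset {w // G.Adj v w},
      (∀ u w, G.dist u w = #(S u ∆ S w)) ∧ S v = ∅ ∧ ∀ w : {w // G.Adj v w}, S w = {w} := by
  set R : V → Finset (Fin n) := fun u => {i | f u i ≠ f v i}
  have hR (u w : V) : G.dist u w = #(R u ∆ R w) := by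
    rw [hf.2.2, cubeGraph_dist, card_symmDiff_filter_ne]
  have hRv : R v = ∅ := by simp [R]
  have hsingle (w : {w // G.Adj v w}) : ∃ i, R w = {i} := by
    have h := hR v w
    rw [dist_eq_one_iff_adj.mpr w.2, hRv, ← bot_eq_empty, bot_symmDiff] at h
    exact card_eq_one.mp h.symm
  choose e he using hsingle
  have he_inj : Function.Injective e := fun w w' h =>
    Subtype.ext (eq_of_dist_eq_card_symmDiff hR (w.2.reachable.symm.trans w'.2.reachable)
      (by rw [he, he, h]))
  have hcard : Fintype.card {w // G.Adj v w} = Fintype.card (Fin n) := by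
    rw [Fintype.card_fin, ← hdeg, ← card_neighborSet_eq_degree]
    rfl
  let E := Equiv.ofBijective e ((Fintype.bijective_iff_injective_and_card e).mpr ⟨he_inj, hcard⟩)
  refine ⟨fun u => (R u).image E.symm, fun u w => ?_, by simp [hRv], fun w => ?_⟩
  · rw [← image_symmDiff _ _ E.symm.injective, card_image_of_injective _ E.symm.injective, hR]
  · change (R w).image E.symm = {w}
    rw [he, image_singleton]
    exact congrArg _ (E.symm_apply_apply w)

end Coordinates

theorem stmt9_general {V : Type*} [Fintype V] (G : SimpleGraph V)
    [DecidableRel G.Adj] (hG : IsMedianGraph G) (v : V) (hdeg : G.degree v = idim G) :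
    Nonempty (G ≃g simplexGraph (nbrGraph G v)) := by
  classical
  obtain ⟨f, hf⟩ := exists_isIsometricEmbedding_idim hG.1 hdeg
  obtain ⟨S, hS, hv, hnbr⟩ := hf.exists_neighbor_coordinates hdeg
  exact nonempty_iso_simplexGraph_nbrGraph hG hS hv hnbr

/-- A finite median graph with a vertex `v` of degree equal to the isometric dimension
is isomorphic to the simplex graph of the graph on the neighbors of `v` in which two
neighbors are adjacent iff they have a common neighbor other than `v`. -/
theorem stmt9 {V : Type*} [Fintype V] [DecidableEq V] (G : SimpleGraph V)
    [DecidableRel G.Adj] (hG : IsMedianGraph G) (v : V) (hdeg : G.degree v = idim G) :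
    Nonempty (G ≃g simplexGraph (nbrGraph G v)) :=
  stmt9_general G hG v hdeg
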